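/- Let k ≥ 1 and let n ≥ 4 be an even integer, and set r = √(1 − (1 − cos(π/n))/(2k)). Then a unit vector l ∈ ℝ^{2k} satisfies ⟨c_{iu}, l⟩² ≥ 1 − r² for all i ∈ {1,…,k} and u ∈ {1,…,n} if and only if for every i ∈ {1,…,k} there exists u_i ∈ {1,…,2n} such that the i-th planar projection of l equals (1/√k)·(cos((2u_i − 1)π/(2n)), sin((2u_i − 1)π/(2n))). In particular, every such l has each planar projection of norm exactly 1/√k. -/

import Mathlib

open scoped RealInnerProductSpace
open Real

/-- The scaffolding ball center `c_{iu}` in `ℝ^{2k}`: the unit vector whose `i`-th planar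
projection is `(cos((u−1)π/n), sin((u−1)π/n))` and whose other coordinates are `0`. -/
noncomputable def ballCenter (k n : ℕ) (i : Fin k) (u : ℕ) :
    EuclideanSpace ℝ (Fin (2 * k)) :=
  (WithLp.equiv 2 (Fin (2 * k) → ℝ)).symm fun idx =>
    if (idx : ℕ) = 2 * (i : ℕ) then Real.cos (((u : ℝ) - 1) * Real.pi / n)
    else if (idx : ℕ) = 2 * (i : ℕ) + 1 then Real.sin (((u : ℝ) - 1) * Real.pi / n)
    else 0

/-- The index of the first coordinate of the `i`-th plane. -/
def idxX (k : ℕ) (i : Fin k) : Fin (2 * k) := ⟨2 * (i : ℕ), by have := i.2; omega⟩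

/-- The index of the second coordinate of the `i`-th plane. -/
def idxY (k : ℕ) (i : Fin k) : Fin (2 * k) := ⟨2 * (i : ℕ) + 1, by have := i.2; omega⟩

/-!
Fix a plane `i` and write `g u = ⟪c_{iu}, l⟫ = cos θ_u · a + sin θ_u · b`, where `(a, b) = l_i`
and `θ_u = (u - 1)π/n`. Since `θ_{n+1} = θ_1 + π`, `g` changes sign between two consecutive
angles, and two components `p, q` of `(a, b)` along directions at angle `d` apart satisfy
`p² + q² - 2pq cos d = (a² + b²) sin² d`. When `pq ≤ 0` and `p², q² ≥ 1 - r² = sin²(π/2n)/k`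
this gives `a² + b² ≥ 1/k`. The planes share the total mass `‖l‖² = 1`, so equality holds in
every plane; then `p = -q`, i.e. `l_i` is orthogonal to the bisector `(2u - 1)π/(2n)`, and as
`n` is even, `l_i` lies at an apex angle `(2v - 1)π/(2n)`. Conversely, at an apex every `g u` is
`cos` of an odd multiple of `π/(2n)`; as `n` is even this odd multiple stays at least `π/(2n)`
away from the zeros `π/2 + ℤπ` of `cos`.
-/

lemma exists_mul_succ_nonpos (f : ℕ → ℝ) {m n : ℕ} (hmn : m < n) (h : f m * f n ≤ 0) :
    ∃ u, m ≤ u ∧ u < n ∧ f u * f (u + 1) ≤ 0 := by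
  induction n, hmn using Nat.le_induction with
  | base => exact ⟨m, le_rfl, Nat.lt_succ_self m, h⟩
  | succ n hmn ih =>
    by_cases hn : f n * f (n + 1) ≤ 0
    · exact ⟨n, by omega, Nat.lt_succ_self n, hn⟩
    · have hmn' : f m * f n ≤ 0 := by
        by_contra hc
        have := mul_pos (lt_of_not_ge hc) (lt_of_not_ge hn)
        nlinarith [mul_nonpos_of_nonpos_of_nonneg h (sq_nonneg (f n))]
      obtain ⟨u, hmu, hun, hu⟩ := ih hmn'
      exact ⟨u, hmu, hun.trans (Nat.lt_succ_self n), hu⟩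

lemma two_mul_one_add_le_of_mul_nonpos {t c p q : ℝ} (ht : 0 ≤ t) (hc : 0 ≤ c)
    (hpq : p * q ≤ 0) (hp : t ≤ p ^ 2) (hq : t ≤ q ^ 2) :
    2 * t * (1 + c) ≤ p ^ 2 + q ^ 2 - 2 * p * q * c := by
  have : t ≤ -(p * q) := by nlinarith [mul_le_mul hp hq ht (sq_nonneg p)]
  nlinarith

lemma add_eq_zero_of_two_mul_one_add_eq {t c p q : ℝ} (ht : 0 ≤ t) (hc : 0 ≤ c)
    (hpq : p * q ≤ 0) (hp : t ≤ p ^ 2) (hq : t ≤ q ^ 2)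
    (h : p ^ 2 + q ^ 2 - 2 * p * q * c = 2 * t * (1 + c)) : p + q = 0 := by
  have htpq : t ≤ -(p * q) := by nlinarith [mul_le_mul hp hq ht (sq_nonneg p)]
  have hp' : p ^ 2 = t := by nlinarith [mul_nonneg hc (sub_nonneg.mpr htpq)]
  have hq' : q ^ 2 = t := by nlinarith [mul_nonneg hc (sub_nonneg.mpr htpq)]
  have hpq' : p * q = -t := by nlinarith
  exact pow_eq_zero_iff two_ne_zero |>.mp (by linear_combination hp' + 2 * hpq' + hq')

lemma sin_sq_eq_two_mul_sin_half_sq_mul (d : ℝ) :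
    sin d ^ 2 = 2 * sin (d / 2) ^ 2 * (1 + cos d) := by
  have hs : sin d = 2 * sin (d / 2) * cos (d / 2) := by rw [← sin_two_mul]; ring_nf
  have hc : cos d = 2 * cos (d / 2) ^ 2 - 1 := by rw [← cos_two_mul]; ring_nf
  rw [hs, hc]; ring

lemma one_sub_cos_eq_two_mul_sin_half_sq (d : ℝ) : 1 - cos d = 2 * sin (d / 2) ^ 2 := by
  have hc := cos_sq (d / 2)
  rw [show 2 * (d / 2) = d by ring] at hc
  linarith [sin_sq_add_cos_sq (d / 2)]

lemma sin_le_sin_of_le_of_le_pi_sub {a y : ℝ} (ha : -(π / 2) ≤ a) (hay : a ≤ y)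
    (hy : y ≤ π - a) : sin a ≤ sin y := by
  rcases le_total y (π / 2) with hy2 | hy2
  · exact sin_le_sin_of_le_of_le_pi_div_two ha hy2 hay
  · rw [← sin_pi_sub y]
    exact sin_le_sin_of_le_of_le_pi_div_two ha (by linarith) (by linarith)

lemma sin_sq_le_sin_sq_int_mul_div (N : ℕ) {M : ℤ} (hM : ¬(N : ℤ) ∣ M) :
    sin (π / N) ^ 2 ≤ sin (M * π / N) ^ 2 := by
  rcases Nat.eq_zero_or_pos N with rfl | hN
  · simp
  have hNR : (0 : ℝ) < N := by exact_mod_cast hN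
  have hdecomp := Int.emod_add_mul_ediv M N
  set r := M % N
  set q := M / N
  have hr0 : 0 < r := lt_of_le_of_ne (Int.emod_nonneg _ (by omega))
    (Ne.symm fun h => hM (Int.dvd_of_emod_eq_zero h))
  have hrN : r < N := Int.emod_lt_of_pos _ (by omega)
  have hper : sin (M * π / N) ^ 2 = sin (r * π / N) ^ 2 := by
    have hangle : M * π / N = r * π / N + q * π := by
      rw [← hdecomp]; push_cast; field_simp
    have hsign : ((-1 : ℝ) ^ q) ^ 2 = 1 := by
      rw [← zpow_natCast, ← zpow_mul, mul_comm, zpow_mul]; norm_num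
    rw [hangle, sin_add_int_mul_pi, mul_pow, hsign, one_mul]
  rw [hper]
  have h1 : (1 : ℝ) ≤ r := by exact_mod_cast hr0
  have h2 : (r : ℝ) ≤ N - 1 := by
    have : r ≤ N - 1 := by omega
    exact_mod_cast this
  apply pow_le_pow_left₀ (sin_nonneg_of_nonneg_of_le_pi (by positivity) ?_)
  · apply sin_le_sin_of_le_of_le_pi_sub
    · linarith [show 0 < π / N by positivity, pi_pos]
    · rw [div_le_div_iff_of_pos_right hNR]; nlinarith [pi_pos]
    · rw [show π - π / N = (N - 1) * π / N by field_simp]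
      gcongr
  · rw [div_le_iff₀ hNR]; nlinarith [pi_pos]

lemma cos_pi_div_nonneg {n : ℕ} (hn : 2 ≤ n) : 0 ≤ cos (π / n) := by
  have : π / n ≤ π / 2 := div_le_div_of_nonneg_left pi_pos.le two_pos (by exact_mod_cast hn)
  exact cos_nonneg_of_mem_Icc ⟨by linarith [show 0 < π / n by positivity, pi_pos], this⟩

lemma sin_pi_div_div_two_ne_zero {n : ℕ} (hn : n ≠ 0) : sin (π / n / 2) ≠ 0 := by
  have hn1 : (1 : ℝ) ≤ n := by exact_mod_cast Nat.one_le_iff_ne_zero.mpr hn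
  refine (sin_pos_of_pos_of_lt_pi (by positivity) ?_).ne'
  calc π / n / 2 ≤ π / 2 := by gcongr; exact div_le_self pi_pos.le hn1
    _ < π := by linarith [pi_pos]

noncomputable def dirComp (α a b : ℝ) : ℝ := cos α * a + sin α * b

lemma dirComp_add_pi (α a b : ℝ) : dirComp (α + π) a b = -dirComp α a b := by
  simp only [dirComp, cos_add_pi, sin_add_pi]; ring

lemma dirComp_polar (α ρ φ : ℝ) : dirComp α (ρ * cos φ) (ρ * sin φ) = ρ * cos (α - φ) := by
  rw [dirComp, cos_sub]; ring

lemma dirComp_sq_add_sq_sub_two_mul_cos (α d a b : ℝ) :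
    dirComp α a b ^ 2 + dirComp (α + d) a b ^ 2 - 2 * dirComp α a b * dirComp (α + d) a b * cos d
      = (a ^ 2 + b ^ 2) * sin d ^ 2 := by
  simp only [dirComp, cos_add, sin_add]
  linear_combination (-(cos α * a + sin α * b) ^ 2) * sin_sq_add_cos_sq d
    + sin d ^ 2 * (a ^ 2 + b ^ 2) * sin_sq_add_cos_sq α

lemma dirComp_sub_add_dirComp_add (m d a b : ℝ) :
    dirComp (m - d) a b + dirComp (m + d) a b = 2 * cos d * dirComp m a b := by
  simp only [dirComp, cos_add, sin_add, cos_sub, sin_sub]; ring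

lemma eq_polar_of_dirComp_eq_zero {m a b ρ : ℝ} (h : dirComp m a b = 0)
    (hρ : a ^ 2 + b ^ 2 = ρ ^ 2) :
    (a = ρ * cos (m + π / 2) ∧ b = ρ * sin (m + π / 2)) ∨
      (a = ρ * cos (m - π / 2) ∧ b = ρ * sin (m - π / 2)) := by
  rw [dirComp] at h
  simp only [cos_add_pi_div_two, sin_add_pi_div_two, cos_sub_pi_div_two, sin_sub_pi_div_two]
  set w := cos m * b - sin m * a
  have hm := sin_sq_add_cos_sq m
  have ha : a = -sin m * w := by linear_combination cos m * h - a * hm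
  have hb : b = cos m * w := by linear_combination sin m * h - b * hm
  have hw : (w - ρ) * (w + ρ) = 0 := by
    rw [ha, hb] at hρ; linear_combination hρ - w ^ 2 * hm
  rcases mul_eq_zero.mp hw with hw | hw
  · left
    constructor
    · linear_combination ha - sin m * hw
    · linear_combination hb + cos m * hw
  · right
    constructor
    · linear_combination ha - sin m * hw
    · linear_combination hb + cos m * hw

lemma sq_le_of_crossing {α d a b ρ : ℝ} (hd : 0 ≤ cos d) (hs : sin (d / 2) ≠ 0)
    (hpq : dirComp α a b * dirComp (α + d) a b ≤ 0)
    (hp : (ρ * sin (d / 2)) ^ 2 ≤ dirComp α a b ^ 2)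
    (hq : (ρ * sin (d / 2)) ^ 2 ≤ dirComp (α + d) a b ^ 2) :
    ρ ^ 2 ≤ a ^ 2 + b ^ 2 := by
  have key := two_mul_one_add_le_of_mul_nonpos (sq_nonneg _) hd hpq hp hq
  rw [dirComp_sq_add_sq_sub_two_mul_cos, sin_sq_eq_two_mul_sin_half_sq_mul] at key
  have hpos : 0 < 2 * sin (d / 2) ^ 2 * (1 + cos d) := by positivity
  nlinarith

lemma dirComp_add_half_eq_zero_of_crossing {α d a b ρ : ℝ} (hd : 0 ≤ cos d)
    (hpq : dirComp α a b * dirComp (α + d) a b ≤ 0)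
    (hp : (ρ * sin (d / 2)) ^ 2 ≤ dirComp α a b ^ 2)
    (hq : (ρ * sin (d / 2)) ^ 2 ≤ dirComp (α + d) a b ^ 2) (hρ : a ^ 2 + b ^ 2 = ρ ^ 2) :
    dirComp (α + d / 2) a b = 0 := by
  have hsum := add_eq_zero_of_two_mul_one_add_eq (sq_nonneg _) hd hpq hp hq (by
    rw [dirComp_sq_add_sq_sub_two_mul_cos, sin_sq_eq_two_mul_sin_half_sq_mul, hρ]; ring)
  have hcos : cos (d / 2) ≠ 0 := by
    intro h0
    have := cos_sq (d / 2)
    rw [h0, show 2 * (d / 2) = d by ring] at this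
    linarith
  have := dirComp_sub_add_dirComp_add (α + d / 2) (d / 2) a b
  rw [add_sub_cancel_right, add_assoc, add_halves, hsum] at this
  simpa [hcos] using this.symm

noncomputable def centerAngle (n : ℕ) (u : ℝ) : ℝ := (u - 1) * π / n

noncomputable def apexAngle (n : ℕ) (v : ℝ) : ℝ := (2 * v - 1) * π / (2 * n)

lemma exists_apexAngle_eq {n : ℕ} (hn : n ≠ 0) (j : ℤ) :
    ∃ v ∈ Finset.Icc 1 (2 * n),
      cos (apexAngle n j) = cos (apexAngle n v) ∧ sin (apexAngle n j) = sin (apexAngle n v) := by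
  have hdecomp := Int.emod_add_mul_ediv (j - 1) (2 * n)
  set r := (j - 1) % (2 * n)
  set q := (j - 1) / (2 * n)
  have hr0 : 0 ≤ r := Int.emod_nonneg _ (by omega)
  have hr : r < 2 * n := Int.emod_lt_of_pos _ (by omega)
  refine ⟨r.toNat + 1, Finset.mem_Icc.mpr ⟨by omega, by omega⟩, ?_⟩
  have hangle : apexAngle n j = apexAngle n (r.toNat + 1 : ℕ) + q * (2 * π) := by
    have hj : (j : ℝ) = r + 2 * n * q + 1 := by exact_mod_cast (by omega : j = r + 2 * n * q + 1)
    have hv : ((r.toNat + 1 : ℕ) : ℝ) = r + 1 := by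
      push_cast; rw [← Int.cast_natCast, Int.toNat_of_nonneg hr0]
    simp only [apexAngle, hj, hv]
    field_simp
    ring
  rw [hangle, cos_add_int_mul_two_pi, sin_add_int_mul_two_pi]
  exact ⟨rfl, rfl⟩

lemma exists_crossing {n : ℕ} (hn : n ≠ 0) {t a b : ℝ}
    (H : ∀ u ∈ Finset.Icc 1 n, t ≤ dirComp (centerAngle n u) a b ^ 2) :
    ∃ α, dirComp α a b * dirComp (α + π / n) a b ≤ 0 ∧ t ≤ dirComp α a b ^ 2 ∧
      t ≤ dirComp (α + π / n) a b ^ 2 ∧ ∃ u ∈ Finset.Icc 1 n, α = centerAngle n u := by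
  set f : ℕ → ℝ := fun u => dirComp (centerAngle n u) a b
  have hsucc (u : ℕ) : centerAngle n (u + 1 : ℕ) = centerAngle n u + π / n := by
    simp only [centerAngle]; push_cast; field_simp; ring
  have hlast : f (n + 1) = -f 1 := by
    have : centerAngle n (n + 1 : ℕ) = centerAngle n (1 : ℕ) + π := by
      simp only [centerAngle]; push_cast; field_simp; ring
    simp only [f, this, dirComp_add_pi]
  obtain ⟨u, hu1, hun, hu⟩ := exists_mul_succ_nonpos f
    (Nat.lt_succ_of_le (Nat.one_le_iff_ne_zero.mpr hn)) (by rw [hlast]; nlinarith [sq_nonneg (f 1)])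
  have hfu : t ≤ f u ^ 2 := H u (Finset.mem_Icc.mpr ⟨hu1, by omega⟩)
  have hfu1 : t ≤ f (u + 1) ^ 2 := by
    rcases Nat.lt_or_ge u n with h | h
    · exact H (u + 1) (Finset.mem_Icc.mpr ⟨by omega, h⟩)
    · rw [show u = n by omega, hlast, neg_sq]
      exact H 1 (Finset.mem_Icc.mpr ⟨le_rfl, by omega⟩)
  simp only [f, hsucc] at hu hfu1
  exact ⟨_, hu, hfu, hfu1, u, Finset.mem_Icc.mpr ⟨hu1, by omega⟩, rfl⟩

lemma sq_le_sq_add_sq_of_forall {n : ℕ} {ρ a b : ℝ} (hn : 2 ≤ n)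
    (H : ∀ u ∈ Finset.Icc 1 n, (ρ * sin (π / n / 2)) ^ 2 ≤ dirComp (centerAngle n u) a b ^ 2) :
    ρ ^ 2 ≤ a ^ 2 + b ^ 2 := by
  obtain ⟨α, hpq, hp, hq, -⟩ := exists_crossing (by omega) H
  exact sq_le_of_crossing (cos_pi_div_nonneg hn) (sin_pi_div_div_two_ne_zero (by omega)) hpq hp hq

lemma exists_apex_of_forall {n : ℕ} {ρ a b : ℝ} (hn : 2 ≤ n) (hev : Even n)
    (H : ∀ u ∈ Finset.Icc 1 n, (ρ * sin (π / n / 2)) ^ 2 ≤ dirComp (centerAngle n u) a b ^ 2)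
    (hρ : a ^ 2 + b ^ 2 = ρ ^ 2) :
    ∃ v ∈ Finset.Icc 1 (2 * n), a = ρ * cos (apexAngle n v) ∧ b = ρ * sin (apexAngle n v) := by
  obtain ⟨α, hpq, hp, hq, u, -, rfl⟩ := exists_crossing (by omega) H
  have hmid := dirComp_add_half_eq_zero_of_crossing (cos_pi_div_nonneg hn) hpq hp hq hρ
  obtain ⟨N, rfl⟩ := hev
  have hN : (N : ℝ) ≠ 0 := by norm_cast; omega
  have hm : centerAngle (N + N) u + π / (N + N : ℕ) / 2 = apexAngle (N + N) u := by
    simp only [centerAngle, apexAngle]; push_cast; field_simp; ring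
  have hplus : apexAngle (N + N) u + π / 2 = apexAngle (N + N) (u + N : ℤ) := by
    simp only [apexAngle]; push_cast; field_simp; ring
  have hminus : apexAngle (N + N) u - π / 2 = apexAngle (N + N) (u - N : ℤ) := by
    simp only [apexAngle]; push_cast; field_simp; ring
  rw [hm] at hmid
  rcases eq_polar_of_dirComp_eq_zero hmid hρ with ⟨ha, hb⟩ | ⟨ha, hb⟩
  · obtain ⟨v, hv, hcos, hsin⟩ := exists_apexAngle_eq (n := N + N) (by omega) (u + N)
    exact ⟨v, hv, by rw [ha, hplus, hcos], by rw [hb, hplus, hsin]⟩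
  · obtain ⟨v, hv, hcos, hsin⟩ := exists_apexAngle_eq (n := N + N) (by omega) (u - N)
    exact ⟨v, hv, by rw [ha, hminus, hcos], by rw [hb, hminus, hsin]⟩

lemma forall_of_eq_apex {n : ℕ} (hev : Even n) (ρ : ℝ) (v : ℕ) :
    ∀ u ∈ Finset.Icc 1 n, (ρ * sin (π / n / 2)) ^ 2 ≤
      dirComp (centerAngle n u) (ρ * cos (apexAngle n v)) (ρ * sin (apexAngle n v)) ^ 2 := by
  intro u hu
  have hn : n ≠ 0 := by have := Finset.mem_Icc.mp hu; omega
  obtain ⟨N, rfl⟩ := hev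
  set M : ℤ := 2 * u - 2 * v - 1 + (N + N)
  have hM : ¬((2 * (N + N) : ℕ) : ℤ) ∣ M := fun h => by
    have : (2 : ℤ) ∣ M := (Dvd.intro ((N + N : ℕ) : ℤ) (by push_cast; ring)).trans h
    omega
  have hangle :
      centerAngle (N + N) u - apexAngle (N + N) v + π / 2 = M * π / (2 * (N + N) : ℕ) := by
    have hN : (N : ℝ) ≠ 0 := by norm_cast; omega
    simp only [centerAngle, apexAngle, M]; push_cast; field_simp; ring
  have hhalf : π / (N + N : ℕ) / 2 = π / (2 * (N + N) : ℕ) := by push_cast; ring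
  rw [dirComp_polar, ← sin_add_pi_div_two, hangle, hhalf, mul_pow, mul_pow]
  exact mul_le_mul_of_nonneg_left (sin_sq_le_sin_sq_int_mul_div _ hM) (sq_nonneg ρ)

lemma ballCenter_eq (k n : ℕ) (i : Fin k) (u : ℕ) :
    ballCenter k n i u =
      cos (((u : ℝ) - 1) * π / n) • EuclideanSpace.single (idxX k i) 1 +
      sin (((u : ℝ) - 1) * π / n) • EuclideanSpace.single (idxY k i) 1 := by
  ext idx
  simp only [ballCenter, idxX, idxY, WithLp.equiv_symm_apply, PiLp.toLp_apply, PiLp.add_apply,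
    PiLp.smul_apply, PiLp.single_apply, Fin.ext_iff, smul_eq_mul]
  split_ifs <;> first | omega | simp

lemma inner_ballCenter (k n : ℕ) (i : Fin k) (u : ℕ) (l : EuclideanSpace ℝ (Fin (2 * k))) :
    ⟪ballCenter k n i u, l⟫ =
      cos (((u : ℝ) - 1) * π / n) * l (idxX k i) + sin (((u : ℝ) - 1) * π / n) * l (idxY k i) := by
  simp [ballCenter_eq, inner_add_left, real_inner_smul_left, EuclideanSpace.inner_single_left]

lemma sum_eq_sum_idxX_add_idxY {M : Type*} [AddCommMonoid M] (k : ℕ) (f : Fin (2 * k) → M) :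
    ∑ idx, f idx = ∑ i, (f (idxX k i) + f (idxY k i)) := by
  rw [← (finProdFinEquiv.trans (finCongr (mul_comm k 2))).sum_comp, Fintype.sum_prod_type]
  refine Finset.sum_congr rfl fun i _ => ?_
  rw [Fin.sum_univ_two]
  congr 2 <;> ext <;> simp [idxX, idxY, finProdFinEquiv, add_comm]

lemma norm_sq_eq_sum_planes (k : ℕ) (l : EuclideanSpace ℝ (Fin (2 * k))) :
    ‖l‖ ^ 2 = ∑ i, (l (idxX k i) ^ 2 + l (idxY k i) ^ 2) := by
  rw [EuclideanSpace.real_norm_sq_eq, sum_eq_sum_idxX_add_idxY]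

lemma sum_planes_eq_inv_of_le {k : ℕ} (hk : k ≠ 0) {l : EuclideanSpace ℝ (Fin (2 * k))}
    (hl : ‖l‖ = 1) (h : ∀ i, 1 / (k : ℝ) ≤ l (idxX k i) ^ 2 + l (idxY k i) ^ 2) (i : Fin k) :
    l (idxX k i) ^ 2 + l (idxY k i) ^ 2 = 1 / k := by
  have hsum : ∑ _i : Fin k, 1 / (k : ℝ) = ∑ i, (l (idxX k i) ^ 2 + l (idxY k i) ^ 2) := by
    rw [← norm_sq_eq_sum_planes, hl]; simp [hk]
  exact ((Finset.sum_eq_sum_iff_of_le fun i _ => h i).mp hsum i (Finset.mem_univ i)).symm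

lemma forall_dirComp_iff_exists_apex {k n : ℕ} (hk : k ≠ 0) (hn : 2 ≤ n) (hev : Even n)
    {l : EuclideanSpace ℝ (Fin (2 * k))} (hl : ‖l‖ = 1) :
    (∀ i : Fin k, ∀ u ∈ Finset.Icc 1 n, (1 / √(k : ℝ) * sin (π / n / 2)) ^ 2 ≤
        dirComp (centerAngle n u) (l (idxX k i)) (l (idxY k i)) ^ 2) ↔
      ∀ i : Fin k, ∃ v ∈ Finset.Icc 1 (2 * n),
        l (idxX k i) = 1 / √(k : ℝ) * cos (apexAngle n v) ∧
          l (idxY k i) = 1 / √(k : ℝ) * sin (apexAngle n v) := by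
  have hρ : (1 / √(k : ℝ)) ^ 2 = 1 / k := by rw [div_pow, one_pow, sq_sqrt (Nat.cast_nonneg k)]
  constructor
  · intro H i
    have hplane := sum_planes_eq_inv_of_le hk hl
      (fun j => hρ ▸ sq_le_sq_add_sq_of_forall hn (H j)) i
    exact exists_apex_of_forall hn hev (H i) (hρ ▸ hplane)
  · intro H i
    obtain ⟨v, -, ha, hb⟩ := H i
    rw [ha, hb]
    exact forall_of_eq_apex hev _ v

lemma one_sub_sqrt_sq_eq {k : ℕ} (hk : k ≠ 0) (d : ℝ) :
    1 - √(1 - (1 - cos d) / (2 * k)) ^ 2 = (1 / √(k : ℝ) * sin (d / 2)) ^ 2 := by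
  have hk1 : (1 : ℝ) ≤ k := by exact_mod_cast Nat.one_le_iff_ne_zero.mpr hk
  have hrad : 0 ≤ 1 - (1 - cos d) / (2 * k) := by
    rw [sub_nonneg, div_le_one (by positivity)]
    linarith [neg_one_le_cos d]
  rw [sq_sqrt hrad, one_sub_cos_eq_two_mul_sin_half_sq, mul_pow, div_pow, one_pow,
    sq_sqrt (by positivity)]
  field_simp
  ring

/-- A unit vector `l ∈ ℝ^{2k}` satisfies `⟪c_{iu}, l⟫² ≥ 1 − r²` for all `i ∈ {1,…,k}`,
`u ∈ {1,…,n}` (where `r = √(1 − (1 − cos(π/n))/(2k))`) iff each planar projection of `l`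
is one of the `2n` apices `(1/√k)·(cos((2u_i−1)π/(2n)), sin((2u_i−1)π/(2n)))`,
`u_i ∈ {1,…,2n}`; in particular each planar projection of such an `l` has norm `1/√k`. -/
theorem stabbing_directions_characterization (k n : ℕ) (hk : 1 ≤ k) (hn : 4 ≤ n)
    (hneven : Even n) (r : ℝ)
    (hr : r = Real.sqrt (1 - (1 - Real.cos (Real.pi / n)) / (2 * k)))
    (l : EuclideanSpace ℝ (Fin (2 * k))) (hl : ‖l‖ = 1) :
    ((∀ i : Fin k, ∀ u ∈ Finset.Icc 1 n,
        ⟪ballCenter k n i u, l⟫ ^ 2 ≥ 1 - r ^ 2) ↔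
      (∀ i : Fin k, ∃ u ∈ Finset.Icc 1 (2 * n),
        l (idxX k i) = (1 / Real.sqrt k) * Real.cos ((2 * (u : ℝ) - 1) * Real.pi / (2 * n)) ∧
        l (idxY k i) = (1 / Real.sqrt k) * Real.sin ((2 * (u : ℝ) - 1) * Real.pi / (2 * n))))
    ∧ ((∀ i : Fin k, ∀ u ∈ Finset.Icc 1 n,
        ⟪ballCenter k n i u, l⟫ ^ 2 ≥ 1 - r ^ 2) →
      ∀ i : Fin k, Real.sqrt (l (idxX k i) ^ 2 + l (idxY k i) ^ 2) = 1 / Real.sqrt k) := by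
  have hk0 : k ≠ 0 := by omega
  have hcond : (∀ i : Fin k, ∀ u ∈ Finset.Icc 1 n, ⟪ballCenter k n i u, l⟫ ^ 2 ≥ 1 - r ^ 2) ↔
      ∀ i : Fin k, ∀ u ∈ Finset.Icc 1 n, (1 / √(k : ℝ) * sin (π / n / 2)) ^ 2 ≤
        dirComp (centerAngle n u) (l (idxX k i)) (l (idxY k i)) ^ 2 := by
    simp only [inner_ballCenter, hr, one_sub_sqrt_sq_eq hk0, ge_iff_le]; rfl
  have hiff := hcond.trans (forall_dirComp_iff_exists_apex hk0 (by omega) hneven hl)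
  refine ⟨hiff, fun H i => ?_⟩
  obtain ⟨v, -, ha, hb⟩ := hiff.mp H i
  rw [ha, hb, mul_pow, mul_pow, ← mul_add, cos_sq_add_sin_sq, mul_one, sqrt_sq (by positivity)]
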